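/- Necessity of the future-imposed conditions: if a minimax-MDP admits a feasible policy, then the future-imposed conditions hold. -/
import Mathlib


/-- A minimax Markov Decision Process. -/
structure MinimaxMDP where
  /-- time horizon -/
  T : ℕ
  /-- ambient type of environment states -/
  State : Type
  /-- the ambient type of states is finite -/
  fintype_state : Fintype State
  /-- the set of environment states available at each time -/
  S : ℕ → Set State
  /-- the initial environment state -/
  s1 : State
  /-- the environment state transition map -/
  F : ℕ → State → Set State
  /-- lower action bounds -/
  U : ℕ → State → ℝ
  /-- upper action bounds -/
  V : ℕ → State → ℝ
  /-- lower inventory bounds -/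
  L : ℕ → State → ℝ
  /-- upper inventory bounds -/
  R : ℕ → State → ℝ

namespace MinimaxMDP

variable (M : MinimaxMDP)

/-- The structural hypotheses on a minimax-MDP. -/
def IsValid : Prop :=
  1 ≤ M.T ∧
  (∀ t, 1 ≤ t → t ≤ M.T → (M.S t).Nonempty) ∧
  M.s1 ∈ M.S 1 ∧
  (∀ t s, 1 ≤ t → t + 1 ≤ M.T → s ∈ M.S t → (M.F t s).Nonempty ∧ M.F t s ⊆ M.S (t + 1)) ∧
  (∀ t s, 1 ≤ t → t + 1 ≤ M.T → s ∈ M.S t → M.U t s ≤ M.V t s) ∧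
  M.L 1 M.s1 = 0 ∧ M.R 1 M.s1 = 0

/-- A compatible environment state trajectory on the time window `[α, β]`. -/
def EnvCompat (α β : ℕ) (s : ℕ → M.State) : Prop :=
  (∀ t, α ≤ t → t ≤ β → s t ∈ M.S t) ∧
  (∀ t, α ≤ t → t < β → s (t + 1) ∈ M.F t (s t))

/-- `F_{α→β}(a)`: the set of endpoints of compatible environment trajectories starting at `a`. -/
def Reach (α β : ℕ) (a : M.State) : Set M.State :=
  {b | ∃ s : ℕ → M.State, M.EnvCompat α β s ∧ s α = a ∧ s β = b}

/-- `U_{α→β}(a, b)`: the maximal cumulative lower action bound along compatible trajectories. -/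
noncomputable def Umax (α β : ℕ) (a b : M.State) : ℝ :=
  sSup {u | ∃ s : ℕ → M.State, M.EnvCompat α β s ∧ s α = a ∧ s β = b ∧
    u = ∑ t ∈ Finset.Ico α β, M.U t (s t)}

/-- `V_{α→β}(a, b)`: the minimal cumulative upper action bound along compatible trajectories. -/
noncomputable def Vmin (α β : ℕ) (a b : M.State) : ℝ :=
  sInf {v | ∃ s : ℕ → M.State, M.EnvCompat α β s ∧ s α = a ∧ s β = b ∧
    v = ∑ t ∈ Finset.Ico α β, M.V t (s t)}

/-- `R_{β⇝α}(a)`. -/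
noncomputable def Rto (β α : ℕ) (a : M.State) : ℝ :=
  sInf ((fun b => M.R β b - M.Umax α β a b) '' M.Reach α β a)

/-- `L_{β⇝α}(a)`. -/
noncomputable def Lto (β α : ℕ) (a : M.State) : ℝ :=
  sSup ((fun b => M.L β b - M.Vmin α β a b) '' M.Reach α β a)

/-- `R_{⋆⇝α}(a)`. -/
noncomputable def Rstar (α : ℕ) (a : M.State) : ℝ :=
  sInf ((fun β => M.Rto β α a) '' Set.Icc α M.T)

/-- `L_{⋆⇝α}(a)`. -/
noncomputable def Lstar (α : ℕ) (a : M.State) : ℝ :=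
  sSup ((fun β => M.Lto β α a) '' Set.Icc α M.T)

/-- `R_{⋆⇝α→[α+1]}(a)`. -/
noncomputable def RstarBr (α : ℕ) (a : M.State) : ℝ :=
  sInf ((fun b => M.Rstar (α + 1) b) '' M.F α a)

/-- `L_{⋆⇝α→[α+1]}(a)`. -/
noncomputable def LstarBr (α : ℕ) (a : M.State) : ℝ :=
  sSup ((fun b => M.Lstar (α + 1) b) '' M.F α a)

/-- The future-imposed conditions. -/
def FutureImposed : Prop :=
  M.Lstar 1 M.s1 ≤ M.Rstar 1 M.s1 ∧
  ∀ α, 2 ≤ α → α ≤ M.T → ∀ a ∈ M.Reach 1 (α - 1) M.s1,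
    M.LstarBr (α - 1) a ≤ M.RstarBr (α - 1) a

/-- A `π`-compatible partial trajectory on `[α, β]`. -/
def PiCompat (π : ℕ → M.State → ℝ → ℝ) (α β : ℕ) (s : ℕ → M.State) (x : ℕ → ℝ) : Prop :=
  M.EnvCompat α β s ∧ ∀ t, α ≤ t → t < β → x (t + 1) = x t + π t (s t) (x t)

/-- A feasible partial trajectory on `[α, β]`. -/
def FeasibleTraj (α β : ℕ) (s : ℕ → M.State) (x : ℕ → ℝ) : Prop :=
  (∀ t, α ≤ t → t < β →
    M.U t (s t) ≤ x (t + 1) - x t ∧ x (t + 1) - x t ≤ M.V t (s t)) ∧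
  (∀ t, α ≤ t → t ≤ β → M.L t (s t) ≤ x t ∧ x t ≤ M.R t (s t))

/-- A feasible policy: every `π`-compatible full trajectory is feasible. -/
def FeasiblePolicy (π : ℕ → M.State → ℝ → ℝ) : Prop :=
  ∀ s x, M.PiCompat π 1 M.T s x → s 1 = M.s1 → x 1 = 0 → M.FeasibleTraj 1 M.T s x

section Aux

variable (M : MinimaxMDP)

/-- Gluing two functions at time `β`. -/
def glueFn {A : Type} (β : ℕ) (s e : ℕ → A) : ℕ → A := fun t => if t < β then s t else e t

lemma glueFn_left {A : Type} {β t : ℕ} (s e : ℕ → A) (h : t ≤ β) (hm : s β = e β) :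
    glueFn β s e t = s t := by
  unfold glueFn
  split_ifs with h'
  · rfl
  · have : t = β := le_antisymm h (not_lt.mp h')
    subst this; exact hm.symm

lemma glueFn_right {A : Type} {β t : ℕ} (s e : ℕ → A) (h : β ≤ t) :
    glueFn β s e t = e t := if_neg (not_lt.mpr h)

lemma envCompat_glue {α β γ : ℕ} {s e : ℕ → M.State}
    (hs : M.EnvCompat α β s) (he : M.EnvCompat β γ e) (hm : s β = e β) (hαβ : α ≤ β) :
    M.EnvCompat α γ (glueFn β s e) := by
  constructor
  · intro t h1 h2
    by_cases h : t < β
    · rw [glueFn_left s e h.le hm]; exact hs.1 t h1 h.le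
    · rw [glueFn_right s e (not_lt.mp h)]; exact he.1 t (not_lt.mp h) h2
  · intro t h1 h2
    by_cases h : t < β
    · rw [glueFn_left s e h.le hm, glueFn_left s e h hm]
      exact hs.2 t h1 h
    · have hβt : β ≤ t := not_lt.mp h
      rw [glueFn_right s e hβt, glueFn_right s e (hβt.trans (Nat.le_succ t))]
      exact he.2 t hβt h2
  -- note: glueFn_left at t+1 needs t+1 ≤ β which follows from t < β

lemma exists_ext (hM : M.IsValid) {β γ : ℕ} (hβ : 1 ≤ β) (hβγ : β ≤ γ) (hγT : γ ≤ M.T)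
    {b : M.State} (hb : b ∈ M.S β) : ∃ e, M.EnvCompat β γ e ∧ e β = b := by
  revert hγT
  induction γ, hβγ using Nat.le_induction with
  | base =>
    intro _
    refine ⟨fun _ => b, ⟨?_, ?_⟩, rfl⟩
    · intro t h1 h2
      have : t = β := le_antisymm h2 h1
      subst this; exact hb
    · intro t h1 h2; omega
  | succ γ hβγ ih =>
    intro hγT
    obtain ⟨e, he, heβ⟩ := ih (by omega)
    have heγ : e γ ∈ M.S γ := he.1 γ hβγ le_rfl
    obtain ⟨⟨c, hc⟩, hsub⟩ := hM.2.2.2.1 γ (e γ) (by omega) hγT heγ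
    refine ⟨fun t => if t ≤ γ then e t else c, ⟨?_, ?_⟩, ?_⟩
    · intro t h1 h2
      by_cases h : t ≤ γ
      · simp only [if_pos h]; exact he.1 t h1 h
      · have : t = γ + 1 := by omega
        subst this
        simp only [if_neg h]
        exact hsub hc
    · intro t h1 h2
      by_cases h : t < γ
      · simp only [if_pos h.le, if_pos (by omega : t + 1 ≤ γ)]
        exact he.2 t h1 h
      · have h5 : t = γ := by omega
        subst h5
        simpa [Nat.succ_le_iff] using hc
    · simp only [if_pos hβγ]; exact heβ

/-- Inventory trajectory generated by a policy along an environment trajectory,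
started at `0` at time `1`. -/
noncomputable def xOf (π : ℕ → M.State → ℝ → ℝ) (s : ℕ → M.State) : ℕ → ℝ
  | 0 => 0
  | t + 1 => if t = 0 then 0 else xOf π s t + π t (s t) (xOf π s t)

lemma xOf_one (π : ℕ → M.State → ℝ → ℝ) (s : ℕ → M.State) : M.xOf π s 1 = 0 := by
  simp [xOf]

lemma xOf_succ (π : ℕ → M.State → ℝ → ℝ) (s : ℕ → M.State) {t : ℕ} (ht : 1 ≤ t) :
    M.xOf π s (t + 1) = M.xOf π s t + π t (s t) (M.xOf π s t) := by
  have : t ≠ 0 := by omega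
  simp [xOf, this]

lemma xOf_congr (π : ℕ → M.State → ℝ → ℝ) {H K : ℕ → M.State} :
    ∀ (t : ℕ), (∀ u, u < t → H u = K u) → M.xOf π H t = M.xOf π K t := by
  intro t
  induction t with
  | zero => intro _; rfl
  | succ t ih =>
    intro h
    by_cases ht : t = 0
    · subst ht; simp [xOf]
    · have h1 := ih (fun u hu => h u (by omega))
      have h2 := h t (by omega)
      simp [xOf, ht, h1, h2]

lemma piCompat_xOf (π : ℕ → M.State → ℝ → ℝ) {n : ℕ} {H : ℕ → M.State}
    (hH : M.EnvCompat 1 n H) : M.PiCompat π 1 n H (M.xOf π H) :=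
  ⟨hH, fun t ht _ => M.xOf_succ π H ht⟩

lemma xOf_agree (π : ℕ → M.State → ℝ → ℝ) {α : ℕ} {s H : ℕ → M.State} {x : ℕ → ℝ}
    (hsx : M.PiCompat π 1 α s x) (hx1 : x 1 = 0)
    (hH : ∀ u, 1 ≤ u → u < α → H u = s u) :
    ∀ t, 1 ≤ t → t ≤ α → M.xOf π H t = x t := by
  intro t
  induction t with
  | zero => intro h; omega
  | succ t ih =>
    intro h1 h2
    by_cases ht : t = 0
    · subst ht; rw [M.xOf_one π H, hx1]
    · have ht1 : 1 ≤ t := by omega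
      have htα : t < α := by omega
      rw [M.xOf_succ π H ht1, hH t ht1 htα, ih ht1 htα.le, hsx.2 t ht1 htα]

lemma telescope (g : ℕ → ℝ) {a b : ℕ} (h : a ≤ b) :
    ∑ t ∈ Finset.Ico a b, (g (t + 1) - g t) = g b - g a := by
  induction b, h using Nat.le_induction with
  | base => simp
  | succ b hb ih => rw [Finset.sum_Ico_succ_top hb, ih]; ring

/-- Key estimate: along a feasible policy, any achievable inventory `x α` is constrained
by every compatible environment trajectory continuing from `s α`. -/
lemma core (hM : M.IsValid) (π : ℕ → M.State → ℝ → ℝ) (hπ : M.FeasiblePolicy π)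
    {α β : ℕ} (hα : 1 ≤ α) (hαβ : α ≤ β) (hβT : β ≤ M.T)
    {s : ℕ → M.State} {x : ℕ → ℝ}
    (hsx : M.PiCompat π 1 α s x) (hs1 : s 1 = M.s1) (hx1 : x 1 = 0)
    {e : ℕ → M.State} (he : M.EnvCompat α β e) (hea : e α = s α) :
    M.L β (e β) ≤ x α + ∑ t ∈ Finset.Ico α β, M.V t (e t) ∧
      x α + ∑ t ∈ Finset.Ico α β, M.U t (e t) ≤ M.R β (e β) := by
  have hβ1 : 1 ≤ β := hα.trans hαβ
  have hbS : e β ∈ M.S β := he.1 β hαβ le_rfl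
  obtain ⟨d, hd, hdβ⟩ := M.exists_ext hM hβ1 hβT le_rfl hbS
  set g := glueFn β e d with hgdef
  have hg : M.EnvCompat α M.T g := M.envCompat_glue he hd hdβ.symm hαβ
  have hgα : g α = e α := glueFn_left e d hαβ hdβ.symm
  have hm : s α = g α := by rw [hgα, hea]
  set H := glueFn α s g with hHdef
  have hH : M.EnvCompat 1 M.T H := M.envCompat_glue hsx.1 hg hm hα
  have hHs : ∀ t, t ≤ α → H t = s t := fun t h => glueFn_left s g h hm
  have hHe : ∀ t, α ≤ t → t ≤ β → H t = e t := fun t h1 h2 =>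
    (glueFn_right s g h1).trans (glueFn_left e d h2 hdβ.symm)
  set x' := M.xOf π H with hx'def
  have hfull : M.FeasibleTraj 1 M.T H x' :=
    hπ H x' (M.piCompat_xOf π hH) (by rw [hHs 1 hα, hs1]) (M.xOf_one π H)
  have hagree : x' α = x α :=
    M.xOf_agree π hsx hx1 (fun u _ hu => hHs u hu.le) α hα le_rfl
  have hLB := hfull.2 β hβ1 hβT
  rw [hHe β hαβ le_rfl] at hLB
  have htel : ∑ t ∈ Finset.Ico α β, (x' (t + 1) - x' t) = x' β - x' α := telescope x' hαβ
  have hU : ∑ t ∈ Finset.Ico α β, M.U t (e t) ≤ ∑ t ∈ Finset.Ico α β, (x' (t + 1) - x' t) := by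
    apply Finset.sum_le_sum
    intro t ht
    obtain ⟨h1, h2⟩ := Finset.mem_Ico.mp ht
    have := (hfull.1 t (hα.trans h1) (lt_of_lt_of_le h2 hβT)).1
    rwa [hHe t h1 h2.le] at this
  have hV : ∑ t ∈ Finset.Ico α β, (x' (t + 1) - x' t) ≤ ∑ t ∈ Finset.Ico α β, M.V t (e t) := by
    apply Finset.sum_le_sum
    intro t ht
    obtain ⟨h1, h2⟩ := Finset.mem_Ico.mp ht
    have := (hfull.1 t (hα.trans h1) (lt_of_lt_of_le h2 hβT)).2
    rwa [hHe t h1 h2.le] at this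
  constructor <;> [skip; skip] <;> linarith [hLB.1, hLB.2]

/-- Any achievable inventory lies between `Lstar` and `Rstar`. -/
lemma bounds (hM : M.IsValid) (π : ℕ → M.State → ℝ → ℝ) (hπ : M.FeasiblePolicy π)
    {α : ℕ} {s : ℕ → M.State} {x : ℕ → ℝ}
    (hα : 1 ≤ α) (hαT : α ≤ M.T)
    (hsx : M.PiCompat π 1 α s x) (hs1 : s 1 = M.s1) (hx1 : x 1 = 0) :
    M.Lstar α (s α) ≤ x α ∧ x α ≤ M.Rstar α (s α) := by
  have hsα : s α ∈ M.S α := hsx.1.1 α hα le_rfl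
  have hne : ∀ β, α ≤ β → β ≤ M.T → (M.Reach α β (s α)).Nonempty := by
    intro β h1 h2
    obtain ⟨e, he, heα⟩ := M.exists_ext hM hα h1 h2 hsα
    exact ⟨e β, e, he, heα, rfl⟩
  constructor
  · apply csSup_le ((Set.nonempty_Icc.mpr hαT).image _)
    rintro y ⟨β, hβ, rfl⟩
    obtain ⟨h1, h2⟩ := Set.mem_Icc.mp hβ
    apply csSup_le ((hne β h1 h2).image _)
    rintro y ⟨b, hb, rfl⟩
    have hVm : M.L β b - x α ≤ M.Vmin α β (s α) b := by
      apply le_csInf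
      · obtain ⟨e, he, heα, heβ⟩ := hb
        exact ⟨_, e, he, heα, heβ, rfl⟩
      · rintro v ⟨e, he, heα, heβ, rfl⟩
        have hc := (M.core hM π hπ hα h1 h2 hsx hs1 hx1 he heα).1
        rw [heβ] at hc
        linarith
    show M.L β b - M.Vmin α β (s α) b ≤ x α
    linarith
  · apply le_csInf ((Set.nonempty_Icc.mpr hαT).image _)
    rintro y ⟨β, hβ, rfl⟩
    obtain ⟨h1, h2⟩ := Set.mem_Icc.mp hβ
    apply le_csInf ((hne β h1 h2).image _)
    rintro y ⟨b, hb, rfl⟩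
    have hUm : M.Umax α β (s α) b ≤ M.R β b - x α := by
      apply csSup_le
      · obtain ⟨e, he, heα, heβ⟩ := hb
        exact ⟨_, e, he, heα, heβ, rfl⟩
      · rintro u ⟨e, he, heα, heβ, rfl⟩
        have hc := (M.core hM π hπ hα h1 h2 hsx hs1 hx1 he heα).2
        rw [heβ] at hc
        linarith
    show x α ≤ M.R β b - M.Umax α β (s α) b
    linarith

end Aux

end MinimaxMDP

/-- **Lemma (Necessity of the future-imposed conditions).** If a minimax-MDP admits a feasible
policy, then the future-imposed conditions hold. -/
theorem futureImposed_necessary (M : MinimaxMDP) (hM : M.IsValid)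
    (hfeas : ∃ π : ℕ → M.State → ℝ → ℝ, M.FeasiblePolicy π) :
    M.FutureImposed := by
  obtain ⟨π, hπ⟩ := hfeas
  constructor
  · -- initial condition
    have h := M.bounds hM π hπ (α := 1) (s := fun _ => M.s1) (x := fun _ => 0)
      le_rfl hM.1 ⟨⟨?_, ?_⟩, ?_⟩ rfl rfl
    · exact h.1.trans h.2
    · intro t h1 h2
      have : t = 1 := le_antisymm h2 h1
      subst this
      exact hM.2.2.1
    · intro t h1 h2; omega
    · intro t h1 h2; omega
  · intro α hα2 hαT a ha
    obtain ⟨e, he, he1, heA⟩ := ha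
    set γ := α - 1 with hγdef
    have hγ1 : 1 ≤ γ := by omega
    have hγT : γ + 1 ≤ M.T := by omega
    have haS : a ∈ M.S γ := heA ▸ he.1 γ hγ1 le_rfl
    obtain ⟨hFne, hFsub⟩ := hM.2.2.2.1 γ a hγ1 hγT haS
    set X := M.xOf π e γ + π γ a (M.xOf π e γ) with hXdef
    have key : ∀ b ∈ M.F γ a, M.Lstar (γ + 1) b ≤ X ∧ X ≤ M.Rstar (γ + 1) b := by
      intro b hb
      have hbS : b ∈ M.S (γ + 1) := hFsub hb
      set e2 : ℕ → M.State := fun t => if t ≤ γ then a else b with he2def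
      have he2 : M.EnvCompat γ (γ + 1) e2 := by
        constructor
        · intro t h1 h2
          by_cases h : t ≤ γ
          · have : t = γ := le_antisymm h h1
            subst this
            simpa [he2def] using haS
          · have : t = γ + 1 := by omega
            subst this
            simpa [he2def, h] using hbS
        · intro t h1 h2
          have : t = γ := by omega
          subst this
          simpa [he2def, Nat.succ_le_iff] using hb
      have hm : e γ = e2 γ := by simp [he2def, heA]
      set H := MinimaxMDP.glueFn γ e e2 with hHdef
      have hH : M.EnvCompat 1 (γ + 1) H := M.envCompat_glue he he2 hm hγ1
      have hHtop : H (γ + 1) = b := by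
        rw [hHdef, MinimaxMDP.glueFn_right e e2 (Nat.le_succ γ)]
        simp [he2def]
      have hHγ : H γ = a := by
        rw [hHdef, MinimaxMDP.glueFn_left e e2 le_rfl hm, heA]
      have hb1 := M.bounds hM π hπ (α := γ + 1) (by omega) hγT (M.piCompat_xOf π hH)
        (by rw [hHdef, MinimaxMDP.glueFn_left e e2 hγ1 hm, he1]) (M.xOf_one π H)
      have hcongr : M.xOf π H γ = M.xOf π e γ :=
        M.xOf_congr π γ (fun u hu => MinimaxMDP.glueFn_left e e2 hu.le hm)
      have hxH : M.xOf π H (γ + 1) = X := by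
        rw [M.xOf_succ π H hγ1, hcongr, hHγ]
      rw [hHtop, hxH] at hb1
      exact hb1
    have h1 : M.LstarBr γ a ≤ X := by
      apply csSup_le (hFne.image _)
      rintro y ⟨b, hb, rfl⟩
      exact (key b hb).1
    have h2 : X ≤ M.RstarBr γ a := by
      apply le_csInf (hFne.image _)
      rintro y ⟨b, hb, rfl⟩
      exact (key b hb).2
    exact h1.trans h2
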